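/- arXiv:2109.00727 — 2 statements merged into one kernel-verified Lean document; each statement's English description precedes it below -/
import Mathlib

section
/- For any positive integer ℓ, there exists a set of 2^ℓ vectors b_1, …, b_{2^ℓ} in R^{2^{ℓ+1}}, each with entries in {0, 2^{−ℓ/2}}, such that ‖b_i‖ = 1 for all i, ⟨b_i, b_j⟩ = 1/2 for all i ≠ j, and, defining b̄_j := 2^{−ℓ/2}·𝟙 − b_j (where 𝟙 is the all-ones vector), ⟨b_i, b̄_j⟩ = 1/2 for all i ≠ j and ⟨b_i, b̄_i⟩ = 0. -/
/-!
Index the coordinates by pairs `(y, ε) ∈ 𝔽₂^ℓ × 𝔽₂` and let `b_v` be the normalised indicator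
of the graph `{(y, v ⬝ y)}` of the linear functional `y ↦ v ⬝ y`. Two such graphs meet over the
`y` with `v ⬝ y = w ⬝ y`: everywhere if `v = w`, and on a hyperplane, i.e. half of `𝔽₂^ℓ`,
otherwise. Each graph meets every fibre `{y} × 𝔽₂` exactly once, so `⟪b_v, 2^{-ℓ/2} 𝟙⟫ = 1`.
-/

/-- The all-ones vector in `ℝ^m`. -/
noncomputable def allOnes (m : ℕ) : EuclideanSpace ℝ (Fin m) := WithLp.toLp 2 (fun _ => 1)

open Finset

lemma AddMonoidHom.card_mul_card_filter_eq_zero {G M : Type*} [AddGroup G] [Fintype G]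
    [AddMonoid M] [Fintype M] [DecidableEq M] (f : G →+ M) (hf : Function.Surjective f) :
    Fintype.card M * #{g | f g = 0} = Fintype.card G := by
  have hfiber : ∀ x, #{g | f g = x} = #{g | f g = 0} := fun x =>
    AddMonoidHom.card_fiber_eq_of_mem_range f (hf x) (hf 0)
  calc Fintype.card M * #{g | f g = 0} = ∑ x, #{g | f g = x} := by simp [hfiber]
    _ = Fintype.card G := (card_eq_sum_card_fiberwise fun g _ => mem_univ (f g)).symm

lemma card_mul_card_filter_dotProduct_eq {K n : Type*} [Field K] [Fintype K] [DecidableEq K]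
    [Fintype n] [DecidableEq n] {v w : n → K} (hvw : v ≠ w) :
    Fintype.card K * #{y | v ⬝ᵥ y = w ⬝ᵥ y} = Fintype.card K ^ Fintype.card n := by
  obtain ⟨t, ht⟩ : ∃ t, (v - w) t ≠ 0 := Function.ne_iff.mp (sub_ne_zero.mpr hvw)
  let φ : (n → K) →+ K := AddMonoidHom.mk' ((v - w) ⬝ᵥ ·) (dotProduct_add _)
  have hφ : Function.Surjective φ := fun a =>
    ⟨Pi.single t (a / (v - w) t), by
      change (v - w) ⬝ᵥ _ = a
      rw [dotProduct_single, mul_div_cancel₀ _ ht]⟩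
  rw [← Fintype.card_fun, ← φ.card_mul_card_filter_eq_zero hφ]
  simp [φ, sub_dotProduct, sub_eq_zero]

section GraphVec

variable {α β ι : Type*} [Fintype α] [Fintype β] [DecidableEq β] [Fintype ι]

def graphIndicator (f : α → β) (p : α × β) : ℝ := if f p.1 = p.2 then 1 else 0

lemma sum_graphIndicator_mul (f g : α → β) :
    ∑ p, graphIndicator f p * graphIndicator g p = #{a | f a = g a} := by
  rw [Fintype.sum_prod_type, ← sum_boole]
  refine sum_congr rfl fun a _ => ?_
  simp [graphIndicator, eq_comm]

lemma sum_graphIndicator (f : α → β) : ∑ p, graphIndicator f p = Fintype.card α := by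
  rw [Fintype.sum_prod_type]
  simp [graphIndicator]

def graphVec (e : ι ≃ α × β) (f : α → β) : EuclideanSpace ℝ ι :=
  WithLp.toLp 2 (graphIndicator f ∘ e)

lemma inner_graphVec (e : ι ≃ α × β) (f g : α → β) :
    inner ℝ (graphVec e f) (graphVec e g) = #{a | f a = g a} := by
  rw [← sum_graphIndicator_mul, ← e.sum_comp]
  simp [graphVec, PiLp.inner_apply, mul_comm]

lemma inner_graphVec_allOnes {m : ℕ} (e : Fin m ≃ α × β) (f : α → β) :
    inner ℝ (graphVec e f) (allOnes m) = Fintype.card α := by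
  rw [← sum_graphIndicator f, ← e.sum_comp]
  simp [graphVec, allOnes, PiLp.inner_apply]

end GraphVec

lemma rpow_neg_half_mul_self_mul_pow {q : ℝ} (hq : 0 < q) (ℓ : ℕ) :
    q ^ (-(ℓ : ℝ) / 2) * q ^ (-(ℓ : ℝ) / 2) * q ^ ℓ = 1 := by
  rw [← Real.rpow_add hq, ← Real.rpow_natCast, ← Real.rpow_add hq]
  norm_num

section GraphCode

variable {K ι : Type*} [Field K] [Fintype K] [DecidableEq K] {ℓ : ℕ}

noncomputable def graphCode (e : ι ≃ (Fin ℓ → K) × K) (v : Fin ℓ → K) : EuclideanSpace ℝ ι :=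
  ((Fintype.card K : ℝ) ^ (-(ℓ : ℝ) / 2)) • graphVec e (v ⬝ᵥ ·)

lemma graphCode_apply_eq_zero_or (e : ι ≃ (Fin ℓ → K) × K) (v : Fin ℓ → K) (k : ι) :
    graphCode e v k = 0 ∨ graphCode e v k = (Fintype.card K : ℝ) ^ (-(ℓ : ℝ) / 2) := by
  by_cases h : v ⬝ᵥ (e k).1 = (e k).2 <;> simp [graphCode, graphVec, graphIndicator, h]

lemma inner_graphCode_self [Fintype ι] (e : ι ≃ (Fin ℓ → K) × K) (v : Fin ℓ → K) :
    inner ℝ (graphCode e v) (graphCode e v) = 1 := by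
  have hq : (0 : ℝ) < Fintype.card K := mod_cast Fintype.card_pos
  simp only [graphCode, real_inner_smul_left, real_inner_smul_right, inner_graphVec, filter_true,
    card_univ, Fintype.card_fun, Fintype.card_fin, Nat.cast_pow]
  rw [← mul_assoc, rpow_neg_half_mul_self_mul_pow hq]

lemma norm_graphCode [Fintype ι] (e : ι ≃ (Fin ℓ → K) × K) (v : Fin ℓ → K) :
    ‖graphCode e v‖ = 1 := by
  rw [norm_eq_sqrt_real_inner, inner_graphCode_self, Real.sqrt_one]

lemma inner_graphCode_of_ne [Fintype ι] (e : ι ≃ (Fin ℓ → K) × K) {v w : Fin ℓ → K}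
    (hvw : v ≠ w) :
    inner ℝ (graphCode e v) (graphCode e w) = 1 / Fintype.card K := by
  have hq : (0 : ℝ) < Fintype.card K := mod_cast Fintype.card_pos
  have hcount := congrArg (Nat.cast (R := ℝ)) (card_mul_card_filter_dotProduct_eq hvw)
  push_cast at hcount
  rw [Fintype.card_fin] at hcount
  simp only [graphCode, real_inner_smul_left, real_inner_smul_right, inner_graphVec]
  rw [← rpow_neg_half_mul_self_mul_pow hq ℓ, ← hcount]
  field_simp

lemma inner_graphCode_smul_allOnes {m : ℕ} (e : Fin m ≃ (Fin ℓ → K) × K) (v : Fin ℓ → K) :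
    inner ℝ (graphCode e v) (((Fintype.card K : ℝ) ^ (-(ℓ : ℝ) / 2)) • allOnes m) = 1 := by
  have hq : (0 : ℝ) < Fintype.card K := mod_cast Fintype.card_pos
  simp only [graphCode, real_inner_smul_left, real_inner_smul_right, inner_graphVec_allOnes,
    Fintype.card_fun, Fintype.card_fin, Nat.cast_pow]
  rw [← mul_assoc, rpow_neg_half_mul_self_mul_pow hq]

end GraphCode

theorem stmt5_general (ℓ : ℕ) :
    ∃ b : Fin (2 ^ ℓ) → EuclideanSpace ℝ (Fin (2 ^ (ℓ + 1))),
      (∀ i k, b i k = 0 ∨ b i k = (2 : ℝ) ^ (-(ℓ : ℝ) / 2)) ∧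
      (∀ i, ‖b i‖ = 1) ∧
      (∀ i j, i ≠ j → (inner ℝ (b i) (b j) : ℝ) = 1 / 2) ∧
      (∀ i j, i ≠ j →
        (inner ℝ (b i) ((2 : ℝ) ^ (-(ℓ : ℝ) / 2) • allOnes (2 ^ (ℓ + 1)) - b j) : ℝ) = 1 / 2) ∧
      (∀ i,
        (inner ℝ (b i) ((2 : ℝ) ^ (-(ℓ : ℝ) / 2) • allOnes (2 ^ (ℓ + 1)) - b i) : ℝ) = 0) := by
  have hq : (Fintype.card (ZMod 2) : ℝ) = 2 := by simp
  let eI : Fin (2 ^ ℓ) ≃ (Fin ℓ → ZMod 2) := (Fintype.equivFinOfCardEq (by simp)).symm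
  let e : Fin (2 ^ (ℓ + 1)) ≃ (Fin ℓ → ZMod 2) × ZMod 2 :=
    (Fintype.equivFinOfCardEq (by simp [pow_succ])).symm
  have hones (v) := inner_graphCode_smul_allOnes e v
  have hne {i j : Fin (2 ^ ℓ)} (hij : i ≠ j) := inner_graphCode_of_ne e (eI.injective.ne hij)
  rw [hq] at hones hne
  refine ⟨fun i => graphCode e (eI i), fun i k => ?_, fun i => norm_graphCode e _,
    fun i j hij => ?_, fun i j hij => ?_, fun i => ?_⟩
  · simpa [hq] using graphCode_apply_eq_zero_or e (eI i) k
  · exact hne hij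
  · rw [inner_sub_right, hones, hne hij]
    norm_num
  · rw [inner_sub_right, hones, inner_graphCode_self, sub_self]

/-- For any positive integer `ℓ`, there is a set of `2^ℓ` vectors in `ℝ^{2^{ℓ+1}}`, each with
entries in `{0, 2^{-ℓ/2}}`, with unit norms, pairwise inner products `1/2`, and such that the
complementary vectors `b̄_j = 2^{-ℓ/2}·𝟙 − b_j` satisfy `⟪b_i, b̄_j⟫ = 1/2` for `i ≠ j`
and `⟪b_i, b̄_i⟫ = 0`. -/
theorem stmt5 (ℓ : ℕ) (hℓ : 1 ≤ ℓ) :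
    ∃ b : Fin (2 ^ ℓ) → EuclideanSpace ℝ (Fin (2 ^ (ℓ + 1))),
      (∀ i k, b i k = 0 ∨ b i k = (2 : ℝ) ^ (-(ℓ : ℝ) / 2)) ∧
      (∀ i, ‖b i‖ = 1) ∧
      (∀ i j, i ≠ j → (inner ℝ (b i) (b j) : ℝ) = 1 / 2) ∧
      (∀ i j, i ≠ j →
        (inner ℝ (b i) ((2 : ℝ) ^ (-(ℓ : ℝ) / 2) • allOnes (2 ^ (ℓ + 1)) - b j) : ℝ) = 1 / 2) ∧
      (∀ i,
        (inner ℝ (b i) ((2 : ℝ) ^ (-(ℓ : ℝ) / 2) • allOnes (2 ^ (ℓ + 1)) - b i) : ℝ) = 0) :=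
  stmt5_general ℓ
end

section
/- Suppose for a problem one can decide NP-hardly between max det ≥ 2^{λ_c n} and max det < 2^{λ_s n} with λ_c > λ_s. Then for any real p > 1/(λ_c − λ_s), writing q = p(λ_c − λ_s): if max_{S} det(A_S) ≥ 2^{λ_c n} then Z^p(A) ≥ 2^{λ_c p n}, and if max_S det(A_S) < 2^{λ_s n} then Z^p(A) < 2^{λ_s p n + n}; consequently the ratio of these two bounds is 2^{(q−1)n} > 1, so a 2^{(q−1)n}-approximation of Z^p(A) distinguishes the two cases. -/
noncomputable def subdet {n : ℕ} (A : Matrix (Fin n) (Fin n) ℝ) (S : Finset (Fin n)) : ℝ :=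
  (A.submatrix (fun i : S => (i : Fin n)) (fun i : S => (i : Fin n))).det

/-! Principal minors of a positive semidefinite matrix are nonnegative, so `Z^p(A)` is a sum of
`2^n` nonnegative terms: it is at least its largest term `(max_S det A_S)^p` and less than
`2^n` times the `p`-th power of any strict upper bound on the minors. -/

open Real

theorem subdet_nonneg {n : ℕ} {A : Matrix (Fin n) (Fin n) ℝ} (hA : A.PosSemidef)
    (S : Finset (Fin n)) : 0 ≤ subdet A S :=
  (hA.submatrix _).det_nonneg

section SumRpow

variable {ι : Type*} [Fintype ι] {f : ι → ℝ} {p c : ℝ}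

theorem rpow_le_sum_rpow_of_le (hf : ∀ i, 0 ≤ f i) (hc : 0 ≤ c) (hp : 0 ≤ p) {i : ι}
    (hi : c ≤ f i) : c ^ p ≤ ∑ j, f j ^ p :=
  calc c ^ p ≤ f i ^ p := rpow_le_rpow hc hi hp
    _ ≤ ∑ j, f j ^ p :=
      Finset.single_le_sum (fun j _ => rpow_nonneg (hf j) p) (Finset.mem_univ i)

theorem sum_rpow_lt_card_mul_rpow [Nonempty ι] (hf : ∀ i, 0 ≤ f i) (hp : 0 < p)
    (hlt : ∀ i, f i < c) : ∑ i, f i ^ p < Fintype.card ι * c ^ p :=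
  calc ∑ i, f i ^ p < ∑ _i : ι, c ^ p :=
        Finset.sum_lt_sum_of_nonempty Finset.univ_nonempty
          fun i _ => rpow_lt_rpow (hf i) (hlt i) hp
    _ = Fintype.card ι * c ^ p := by
        rw [Finset.sum_const, Finset.card_univ, nsmul_eq_mul]

end SumRpow

theorem stmt14_general {n : ℕ} (A : Matrix (Fin n) (Fin n) ℝ) (hA : A.PosSemidef)
    (lc ls p : ℝ) (hlc : ls < lc) (hp : 1 / (lc - ls) < p) :
    ((∃ S : Finset (Fin n), (2 : ℝ) ^ (lc * n) ≤ subdet A S) →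
        (2 : ℝ) ^ (lc * p * n) ≤ ∑ S : Finset (Fin n), subdet A S ^ p) ∧
    ((∀ S : Finset (Fin n), subdet A S < (2 : ℝ) ^ (ls * n)) →
        ∑ S : Finset (Fin n), subdet A S ^ p < (2 : ℝ) ^ (ls * p * n + n)) ∧
    (2 : ℝ) ^ (lc * p * n) =
      (2 : ℝ) ^ ((p * (lc - ls) - 1) * n) * (2 : ℝ) ^ (ls * p * n + n) := by
  have hp0 : 0 < p := (one_div_pos.2 (sub_pos.2 hlc)).trans hp
  refine ⟨?_, ?_, ?_⟩
  · rintro ⟨S, hS⟩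
    calc (2 : ℝ) ^ (lc * p * n) = ((2 : ℝ) ^ (lc * n)) ^ p := by
          rw [← rpow_mul zero_le_two]; ring_nf
      _ ≤ ∑ T, subdet A T ^ p :=
          rpow_le_sum_rpow_of_le (subdet_nonneg hA) (by positivity) hp0.le hS
  · intro hlt
    calc ∑ S, subdet A S ^ p
        < Fintype.card (Finset (Fin n)) * ((2 : ℝ) ^ (ls * n)) ^ p :=
          sum_rpow_lt_card_mul_rpow (subdet_nonneg hA) hp0 hlt
      _ = (2 : ℝ) ^ (ls * p * n + n) := by
          rw [Fintype.card_finset, Fintype.card_fin, Nat.cast_pow, Nat.cast_ofNat,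
            ← rpow_natCast, ← rpow_mul zero_le_two, ← rpow_add two_pos]
          ring_nf
  · rw [← rpow_add two_pos]
    ring_nf

/-- With `q = p(λ_c − λ_s)`: if `max_S det(A_S) ≥ 2^{λ_c n}` then `Z^p(A) ≥ 2^{λ_c p n}`;
if `max_S det(A_S) < 2^{λ_s n}` then `Z^p(A) < 2^{λ_s p n + n}`; and the two thresholds satisfy
`2^{λ_c p n} = 2^{(q−1)n} · 2^{λ_s p n + n}`. -/
theorem stmt14 {n : ℕ} (A : Matrix (Fin n) (Fin n) ℝ) (hA : A.PosSemidef)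
    (lc ls p : ℝ) (hls : 0 < ls) (hlc : ls < lc) (hp : 1 / (lc - ls) < p) :
    ((∃ S : Finset (Fin n), (2 : ℝ) ^ (lc * n) ≤ subdet A S) →
        (2 : ℝ) ^ (lc * p * n) ≤ ∑ S : Finset (Fin n), subdet A S ^ p) ∧
    ((∀ S : Finset (Fin n), subdet A S < (2 : ℝ) ^ (ls * n)) →
        ∑ S : Finset (Fin n), subdet A S ^ p < (2 : ℝ) ^ (ls * p * n + n)) ∧
    (2 : ℝ) ^ (lc * p * n) =
      (2 : ℝ) ^ ((p * (lc - ls) - 1) * n) * (2 : ℝ) ^ (ls * p * n + n) :=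
  stmt14_general A hA lc ls p hlc hp
end
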